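/- arXiv:2004.02697 — 3 statements merged into one kernel-verified Lean document; each statement's English description precedes it below -/
import Mathlib

section
/- Let p ∈ (0,1) and q ∈ [0,1], and set r_A* = q + (1−p)(1−q)/p and r_B* = p(1−q)/(1−p) + q. Then p/(1+r_A*) + (1−p)/(1+r_B*) − 1/2 = (2p−1)²(1−q)² / (2·(1−(1−2p)²q²)). In particular, if p ≠ 1/2 and q ≠ 1, then p/(1+r_A*) + (1−p)/(1+r_B*) > 1/2. -/
/-- For `p ∈ (0,1)`, `q ∈ [0,1]`, with `r_A* = q + (1-p)(1-q)/p` and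
`r_B* = p(1-q)/(1-p) + q`, the limiting proportion of leaves satisfies
`p/(1+r_A*) + (1-p)/(1+r_B*) - 1/2 = (2p-1)²(1-q)² / (2(1-(1-2p)²q²))`,
and is strictly greater than `1/2` when `p ≠ 1/2` and `q ≠ 1`. -/
theorem leaf_proportion_identity (p q : ℝ) (hp : p ∈ Set.Ioo (0 : ℝ) 1)
    (hq : q ∈ Set.Icc (0 : ℝ) 1)
    (rA rB : ℝ) (hrA : rA = q + (1 - p) * (1 - q) / p)
    (hrB : rB = p * (1 - q) / (1 - p) + q) :
    p / (1 + rA) + (1 - p) / (1 + rB) - 1 / 2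
      = (2 * p - 1) ^ 2 * (1 - q) ^ 2 / (2 * (1 - (1 - 2 * p) ^ 2 * q ^ 2)) ∧
    (p ≠ 1 / 2 → q ≠ 1 → 1 / 2 < p / (1 + rA) + (1 - p) / (1 + rB)) := by
  obtain ⟨hp0, hp1⟩ := hp
  obtain ⟨hq0, hq1⟩ := hq
  have hpne : p ≠ 0 := ne_of_gt hp0
  have hp1ne : (1 : ℝ) - p ≠ 0 := by linarith
  have habs : |(1 - 2 * p) * q| < 1 := by
    rw [abs_mul]
    calc |1 - 2 * p| * |q| ≤ |1 - 2 * p| * 1 := by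
          exact mul_le_mul_of_nonneg_left (by rw [abs_le]; constructor <;> linarith) (abs_nonneg _)
      _ = |1 - 2 * p| := mul_one _
      _ < 1 := by rw [abs_lt]; constructor <;> linarith
  have h1 : 0 < 1 - (1 - 2 * p) * q := by
    have := (abs_lt.mp habs).2; linarith
  have h2 : 0 < 1 + (1 - 2 * p) * q := by
    have := (abs_lt.mp habs).1; linarith
  have ha : 1 + rA = (1 - (1 - 2 * p) * q) / p := by
    rw [hrA]; field_simp; ring
  have hb : 1 + rB = (1 + (1 - 2 * p) * q) / (1 - p) := by
    rw [hrB]; field_simp; ring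
  have hD : 0 < 1 - (1 - 2 * p) ^ 2 * q ^ 2 := by nlinarith [mul_pos h1 h2]
  have hkey : p / (1 + rA) + (1 - p) / (1 + rB) - 1 / 2
      = (2 * p - 1) ^ 2 * (1 - q) ^ 2 / (2 * (1 - (1 - 2 * p) ^ 2 * q ^ 2)) := by
    rw [ha, hb, div_div_eq_mul_div, div_div_eq_mul_div]
    rw [div_add_div _ _ h1.ne' h2.ne', div_sub_div _ _ (mul_pos h1 h2).ne' two_ne_zero,
      div_eq_div_iff (mul_pos (mul_pos h1 h2) two_pos).ne' (mul_pos two_pos hD).ne']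
    ring
  refine ⟨hkey, fun hph hqh => ?_⟩
  have hnum : 0 < (2 * p - 1) ^ 2 * (1 - q) ^ 2 := by
    have h1' : 2 * p - 1 ≠ 0 := fun h => hph (by linarith)
    have h2' : 1 - q ≠ 0 := fun h => hqh (by linarith)
    positivity
  have := div_pos hnum (by positivity : (0:ℝ) < 2 * (1 - (1 - 2 * p) ^ 2 * q ^ 2))
  linarith [hkey ▸ this]
end

section
/- Let p ∈ (0,1) and q ∈ [0,1], set r_A* = q + (1−p)(1−q)/p and r_B* = p(1−q)/(1−p) + q, and for each natural number k define p_k = (p/(1+r_A*))·(r_A*/(1+r_A*))^k + ((1−p)/(1+r_B*))·(r_B*/(1+r_B*))^k. Then p_k = 2^{−k−1} holds for all natural numbers k if and only if p = 1/2 or q = 1. -/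
/-- For `p ∈ (0,1)`, `q ∈ [0,1]`, with `r_A* = q + (1-p)(1-q)/p`,
`r_B* = p(1-q)/(1-p) + q` and
`p_k = (p/(1+r_A*))(r_A*/(1+r_A*))^k + ((1-p)/(1+r_B*))(r_B*/(1+r_B*))^k`,
one has `p_k = 2^{-k-1}` for all `k` iff `p = 1/2` or `q = 1`. -/
theorem cmrt_degree_matches_urt_iff (p q : ℝ) (hp : p ∈ Set.Ioo (0 : ℝ) 1)
    (hq : q ∈ Set.Icc (0 : ℝ) 1)
    (rA rB : ℝ) (hrA : rA = q + (1 - p) * (1 - q) / p)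
    (hrB : rB = p * (1 - q) / (1 - p) + q)
    (pk : ℕ → ℝ)
    (hpk : ∀ k : ℕ, pk k = (p / (1 + rA)) * (rA / (1 + rA)) ^ k
      + ((1 - p) / (1 + rB)) * (rB / (1 + rB)) ^ k) :
    (∀ k : ℕ, pk k = ((2 : ℝ) ^ (k + 1))⁻¹) ↔ (p = 1 / 2 ∨ q = 1) := by
  obtain ⟨hp0, hp1⟩ := hp
  obtain ⟨hq0, hq1⟩ := hq
  have hp1' : (0:ℝ) < 1 - p := by linarith
  have hq1' : (0:ℝ) ≤ 1 - q := by linarith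
  have hrA0 : 0 ≤ rA := by
    rw [hrA]
    have : 0 ≤ (1 - p) * (1 - q) / p := div_nonneg (mul_nonneg hp1'.le hq1') hp0.le
    linarith
  have hrB0 : 0 ≤ rB := by
    rw [hrB]
    have : 0 ≤ p * (1 - q) / (1 - p) := div_nonneg (mul_nonneg hp0.le hq1') hp1'.le
    linarith
  have h1A : (0:ℝ) < 1 + rA := by linarith
  have h1B : (0:ℝ) < 1 + rB := by linarith
  constructor
  · intro h
    set a := rA / (1 + rA) with ha
    set b := rB / (1 + rB) with hb
    set A := p / (1 + rA) with hA
    set B := (1 - p) / (1 + rB) with hB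
    have e0 : A + B = 1/2 := by
      have := (hpk 0).symm.trans (h 0); simp at this; linarith
    have e1 : A * a + B * b = 1/4 := by
      have := (hpk 1).symm.trans (h 1); norm_num at this; linarith
    have e2 : A * a^2 + B * b^2 = 1/8 := by
      have := (hpk 2).symm.trans (h 2); norm_num at this
      calc A * a^2 + B * b^2 = A * (a*a) + B * (b*b) := by ring
        _ = 1/8 := by linarith
    have hApos : 0 < A := div_pos hp0 h1A
    have hBpos : 0 < B := div_pos hp1' h1B
    have hab : a = b := by
      have key : A * B * (a - b)^2 = 0 := by
        have : A * B * (a - b)^2 = (A + B) * (A * a^2 + B * b^2) - (A*a + B*b)^2 := by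
          ring
        rw [e0, e1, e2] at this; linarith
      have hABne : A * B ≠ 0 := (mul_pos hApos hBpos).ne'
      have : (a - b)^2 = 0 := by
        rcases mul_eq_zero.mp key with h' | h'
        · exact absurd h' hABne
        · exact h'
      have := pow_eq_zero_iff (n := 2) (by norm_num) |>.mp this
      linarith [sub_eq_zero.mp this]
    have hrab : rA = rB := by
      rw [ha, hb, div_eq_div_iff h1A.ne' h1B.ne'] at hab
      nlinarith [hab]
    have key : (1 - q) * (1 - 2*p) = 0 := by
      have h' := hrab
      rw [hrA, hrB] at h'
      field_simp at h'
      nlinarith [h']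
    rcases mul_eq_zero.mp key with h' | h'
    · right; linarith
    · left; linarith
  · intro h
    have hA1 : rA = 1 := by
      rcases h with h | h
      · rw [hrA, h]; field_simp; ring
      · rw [hrA, h]; simp
    have hB1 : rB = 1 := by
      rcases h with h | h
      · rw [hrB, h]; field_simp; ring
      · rw [hrB, h]; simp
    intro k
    rw [hpk, hA1, hB1]
    norm_num
    rw [div_pow, one_pow, pow_succ]
    field_simp
    ring
end

section
/- Let K ≥ 1 be a natural number, let p_1, …, p_K be strictly positive reals with ∑_{i=1}^K p_i = 1, and let (q_{ji})_{1≤j,i≤K} be nonnegative reals with ∑_{i=1}^K q_{ji} = 1 for every j. For each i set r_i = (1/p_i)·∑_{j=1}^K p_j q_{ji}, and for each natural number k set c_k = ∑_{i=1}^K (p_i/(1+r_i))·(r_i/(1+r_i))^k. Then c_k = 2^{−k−1} holds for all natural numbers k if and only if the balance equations ∑_{j=1}^K p_j q_{ji} = p_i hold for all i ∈ {1,…,K}. -/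
/-- For the `K`-type CMRT with type probabilities `p_i` and attachment
probabilities `q_{ji}`, setting `r_i = (1/p_i) ∑_j p_j q_{ji}` and
`c_k = ∑_i (p_i/(1+r_i))(r_i/(1+r_i))^k`, the limiting degree distribution
equals that of the URT, i.e. `c_k = 2^{-k-1}` for all `k`, iff the balance
equations `∑_j p_j q_{ji} = p_i` hold for all `i`. -/
theorem general_cmrt_degree_matches_urt_iff (K : ℕ) (hK : 1 ≤ K)
    (p : Fin K → ℝ) (hp : ∀ i, 0 < p i) (hpsum : ∑ i, p i = 1)
    (q : Fin K → Fin K → ℝ) (hq : ∀ j i, 0 ≤ q j i) (hqsum : ∀ j, ∑ i, q j i = 1)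
    (r : Fin K → ℝ) (hr : ∀ i, r i = (1 / p i) * ∑ j, p j * q j i)
    (c : ℕ → ℝ)
    (hc : ∀ k : ℕ, c k = ∑ i, (p i / (1 + r i)) * (r i / (1 + r i)) ^ k) :
    (∀ k : ℕ, c k = ((2 : ℝ) ^ (k + 1))⁻¹) ↔ (∀ i, ∑ j, p j * q j i = p i) := by
  have hS : ∀ i, 0 ≤ ∑ j, p j * q j i := by
    intro i
    exact Finset.sum_nonneg fun j _ => mul_nonneg (hp j).le (hq j i)
  have hr0 : ∀ i, 0 ≤ r i := by
    intro i
    rw [hr i]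
    have hpi := hp i
    exact mul_nonneg (by positivity) (hS i)
  have hr1 : ∀ i, (0:ℝ) < 1 + r i := fun i => by linarith [hr0 i]
  -- the mean of r is 1
  have hmean : ∑ i, p i * r i = 1 := by
    have : ∀ i, p i * r i = ∑ j, p j * q j i := by
      intro i
      rw [hr i]
      field_simp
      exact mul_div_cancel_left₀ _ (hp i).ne'
    rw [Finset.sum_congr rfl fun i _ => this i, Finset.sum_comm]
    calc ∑ j, ∑ i, p j * q j i = ∑ j, p j * ∑ i, q j i := by
          simp [Finset.mul_sum]
      _ = 1 := by simp only [hqsum, mul_one]; exact hpsum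
  constructor
  · intro h i
    have h0 : ∑ i, p i / (1 + r i) = 1 / 2 := by
      have := (hc 0).symm.trans (h 0)
      simpa using this
    -- key: ∑ p_i (r_i - 1)^2 / (1 + r_i) = 0
    have hkey : ∑ i, p i * (r i - 1) ^ 2 / (1 + r i) = 0 := by
      have hterm : ∀ i ∈ Finset.univ,
          p i * (r i - 1) ^ 2 / (1 + r i)
            = p i * r i - 3 * p i + 4 * (p i / (1 + r i)) := by
        intro i _
        have h1 := (hr1 i).ne'
        field_simp
        ring
      rw [Finset.sum_congr rfl hterm]
      rw [Finset.sum_add_distrib, Finset.sum_sub_distrib, ← Finset.mul_sum,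
        ← Finset.mul_sum, hmean, hpsum, h0]
      norm_num
    have hnn : ∀ i ∈ Finset.univ, 0 ≤ p i * (r i - 1) ^ 2 / (1 + r i) := by
      intro i _
      have h1i := hr1 i
      have hpi := hp i
      positivity
    have hz := (Finset.sum_eq_zero_iff_of_nonneg hnn).1 hkey i (Finset.mem_univ i)
    have hri : r i = 1 := by
      have hp' := (hp i).ne'
      have h1 := (hr1 i).ne'
      have : (r i - 1) ^ 2 = 0 := by
        by_contra hne
        have : 0 < p i * (r i - 1) ^ 2 / (1 + r i) := by
          have h2 : 0 < (r i - 1) ^ 2 := lt_of_le_of_ne (sq_nonneg _) (Ne.symm hne)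
          have hpi := hp i
          have h1i := hr1 i
          positivity
        linarith [hz]
      nlinarith [this]
    have := hr i
    rw [hri] at this
    have hp' := (hp i).ne'
    field_simp at this
    linarith [this]
  · intro h k
    have hri : ∀ i, r i = 1 := by
      intro i
      rw [hr i, h i]
      field_simp
      exact div_self (hp i).ne'
    rw [hc k]
    have : ∀ i ∈ Finset.univ,
        p i / (1 + r i) * (r i / (1 + r i)) ^ k = p i * (2 ^ (k+1) : ℝ)⁻¹ := by
      intro i _
      rw [hri i]
      rw [pow_succ]
      norm_num
      ring_nf
      simp only [one_div]
    rw [Finset.sum_congr rfl this, ← Finset.sum_mul, hpsum, one_mul]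
end
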